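/- Let n be a positive integer and let μ ⊆ λ be partitions with |λ| − |μ| = n. If λ/μ is a border strip (of size n), then det M(λ/μ) = (−1)^{spin(λ/μ)}; if λ/μ is not a border strip, then det M(λ/μ) = 0. -/

import Mathlib

open MvPolynomial

namespace Pleth

/-- A partition: a weakly decreasing, finitely supported sequence of natural
numbers (0-indexed: `parts i` is the (i+1)-st part). -/
structure Partition where
  parts : ℕ → ℕ
  antitone : ∀ ⦃i j : ℕ⦄, i ≤ j → parts j ≤ parts i
  finite : (Function.support parts).Finite

namespace Partition

/-- The empty partition. -/
def empty : Partition :=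
  ⟨fun _ => 0, fun _ _ _ => le_rfl, by simp [Function.support]⟩

/-- The size `|λ|` of a partition. -/
noncomputable def size (p : Partition) : ℕ := ∑ᶠ i, p.parts i

/-- The length `ℓ(λ)`: the number of nonzero parts. -/
noncomputable def length (p : Partition) : ℕ := (Function.support p.parts).ncard

/-- Containment of partitions: `Sub μ λ` means `μ ⊆ λ`. -/
def Sub (p q : Partition) : Prop := ∀ i, p.parts i ≤ q.parts i

/-- The cells (boxes) of the Young diagram, 0-indexed: `(i, j)` with `j < λ_{i+1}`. -/
def cells (p : Partition) : Set (ℕ × ℕ) := {c | c.2 < p.parts c.1}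

end Partition

/-- The cells of the skew diagram `λ/μ`. -/
def skew (mu lam : Partition) : Set (ℕ × ℕ) := lam.cells \ mu.cells

/-- Two boxes are adjacent if they share an edge. -/
def Adj (a b : ℕ × ℕ) : Prop :=
  (a.1 = b.1 ∧ (a.2 + 1 = b.2 ∨ b.2 + 1 = a.2)) ∨
    (a.2 = b.2 ∧ (a.1 + 1 = b.1 ∨ b.1 + 1 = a.1))

/-- A set of boxes is connected if any two of its boxes can be joined by a path
of edge-adjacent boxes inside the set. -/
def IsConnectedSet (S : Set (ℕ × ℕ)) : Prop :=
  ∀ a ∈ S, ∀ b ∈ S, Relation.ReflTransGen (fun x y => y ∈ S ∧ Adj x y) a b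

/-- `S` contains no 2×2 block of boxes. -/
def No2x2 (S : Set (ℕ × ℕ)) : Prop :=
  ¬ ∃ i j : ℕ, (i, j) ∈ S ∧ (i + 1, j) ∈ S ∧ (i, j + 1) ∈ S ∧ (i + 1, j + 1) ∈ S

/-- `λ/μ` is a border strip of size `d`: `μ ⊆ λ`, it has exactly `d` boxes,
it is connected, and contains no 2×2 block. -/
def IsBorderStrip (mu lam : Partition) (d : ℕ) : Prop :=
  Partition.Sub mu lam ∧ (skew mu lam).ncard = d ∧
    IsConnectedSet (skew mu lam) ∧ No2x2 (skew mu lam)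

/-- The spin of a skew diagram: its number of nonempty rows minus 1. -/
noncomputable def spin (S : Set (ℕ × ℕ)) : ℕ := (Prod.fst '' S).ncard - 1

/-- `b` is the starting box of `S`: the box in its topmost nonempty row and,
within that row, rightmost column. -/
def IsStartBox (S : Set (ℕ × ℕ)) (b : ℕ × ℕ) : Prop :=
  b ∈ S ∧ (∀ c ∈ S, b.1 ≤ c.1) ∧ (∀ c ∈ S, c.1 = b.1 → c.2 ≤ b.2)

/-- `(λ/μ)↑`: the boxes `(r, c)` of `S` such that `(r-1, c)` is not in `S`. -/
def up (S : Set (ℕ × ℕ)) : Set (ℕ × ℕ) :=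
  {b | b ∈ S ∧ ∀ r : ℕ, r + 1 = b.1 → (r, b.2) ∉ S}

/-- `α` is an `n`-border strip chain of weight `τ` from `μ` to `λ`. -/
def IsChain (n : ℕ) (mu lam : Partition) (τ : List ℕ) (α : ℕ → Partition) : Prop :=
  α 0 = mu ∧ α τ.length = lam ∧
    ∀ i : Fin τ.length, IsBorderStrip (α i) (α (i + 1)) (τ.get i * n)

/-- `α` is a horizontal `n`-border strip chain of weight `τ` from `μ` to `λ`:
the starting box of each strip in the chain lies in `(λ/μ)↑`. -/
def IsHorizontalChain (n : ℕ) (mu lam : Partition) (τ : List ℕ) (α : ℕ → Partition) : Prop :=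
  IsChain n mu lam τ α ∧
    ∀ i : Fin τ.length, ∃ b, IsStartBox (skew (α i) (α (i + 1))) b ∧ b ∈ up (skew mu lam)

/-- `λ/μ` is an `n`-border strip of weight `k`. -/
def IsWeightStrip (n k : ℕ) (mu lam : Partition) : Prop :=
  ∃ (τ : List ℕ) (α : ℕ → Partition),
    (∀ t ∈ τ, 0 < t) ∧ τ.sum = k ∧ IsChain n mu lam τ α

/-- `λ/μ` is a horizontal `n`-border strip of weight `k`: there is a horizontal
`n`-border strip chain of weight `(1, …, 1)` (`k` ones) from `μ` to `λ`. -/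
def IsHorizontalWeightStrip (n k : ℕ) (mu lam : Partition) : Prop :=
  ∃ α : ℕ → Partition, IsHorizontalChain n mu lam (List.replicate k 1) α

/-- The sign of a chain of length `k`: the product of the signs
`(-1)^{spin}` of its strips. -/
noncomputable def chainSign (α : ℕ → Partition) (k : ℕ) : ℤ :=
  ∏ i ∈ Finset.range k, (-1 : ℤ) ^ spin (skew (α i) (α (i + 1)))

open scoped Classical in
/-- The matrix `M(λ/μ)` (of size `l × l`, with `μ` padded by zero parts):
entry `(i,j)` is `1` if `λ_i - i ≥ μ_j - j` and `n ∣ (λ_i - i) - (μ_j - j)`,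
and `0` otherwise. -/
noncomputable def Mmat (n : ℕ) (mu lam : Partition) (l : ℕ) : Matrix (Fin l) (Fin l) ℤ :=
  Matrix.of fun i j : Fin l =>
    if ((mu.parts j : ℤ) - (j : ℤ) ≤ (lam.parts i : ℤ) - (i : ℤ) ∧
        (n : ℤ) ∣ ((lam.parts i : ℤ) - (i : ℤ) - ((mu.parts j : ℤ) - (j : ℤ)))) then 1 else 0

/-- The matrix `A(λ/μ)`: entry `(i,j)` is `λ_i - i - μ_j + j`. -/
def Amat (mu lam : Partition) (l : ℕ) : Matrix (Fin l) (Fin l) ℤ :=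
  Matrix.of fun i j : Fin l =>
    (lam.parts i : ℤ) - (i : ℤ) - (mu.parts j : ℤ) + (j : ℤ)

/-- `h_r` for an integer index `r`, with `h_r = 0` for `r < 0`. -/
noncomputable def hInt (N : ℕ) (r : ℤ) : MvPolynomial (Fin N) ℚ :=
  if 0 ≤ r then hsymm (Fin N) ℚ r.toNat else 0

/-- `e_r` for an integer index `r`, with `e_r = 0` for `r < 0`. -/
noncomputable def eInt (N : ℕ) (r : ℤ) : MvPolynomial (Fin N) ℚ :=
  if 0 ≤ r then esymm (Fin N) ℚ r.toNat else 0

/-- The Schur polynomial of a partition, via the Jacobi–Trudi determinant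
`det(h_{λ_i - i + j})_{i,j=1}^{ℓ(λ)}`. -/
noncomputable def schur (N : ℕ) (p : Partition) : MvPolynomial (Fin N) ℚ :=
  Matrix.det (Matrix.of fun i j : Fin p.length =>
    hInt N ((p.parts i : ℤ) - (i : ℤ) + (j : ℤ)))

/-- `h_m(x₁ⁿ, …, x_Nⁿ)`, i.e. the plethysm `p_n ∘ h_m`. -/
noncomputable def hpow (N n m : ℕ) : MvPolynomial (Fin N) ℚ :=
  aeval (fun i : Fin N => (X i : MvPolynomial (Fin N) ℚ) ^ n) (hsymm (Fin N) ℚ m)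

/-- `e_k(x₁ⁿ, …, x_Nⁿ)`, i.e. up to sign the plethysm `p_n ∘ e_k`. -/
noncomputable def epow (N n k : ℕ) : MvPolynomial (Fin N) ℚ :=
  aeval (fun i : Fin N => (X i : MvPolynomial (Fin N) ℚ) ^ n) (esymm (Fin N) ℚ k)

/-- `z_λ` for `λ : Nat.Partition m`. -/
def zcoeff {m : ℕ} (P : Nat.Partition m) : ℕ :=
  ∏ i ∈ P.parts.toFinset, i ^ (P.parts.count i) * (P.parts.count i).factorial

/-- The plethysm `h_n ∘ h_m` in `N` variables: the complete homogeneous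
symmetric polynomial `h_n` evaluated at the family of all monomials of total
degree `m` in `x₁, …, x_N`. -/
noncomputable def hcomp (N n m : ℕ) : MvPolynomial (Fin N) ℚ :=
  aeval (fun d : (Finset.Nat.antidiagonalTuple N m : Finset (Fin N → ℕ)) =>
      ∏ i : Fin N, (X i : MvPolynomial (Fin N) ℚ) ^ (d.1 i))
    (hsymm (Finset.Nat.antidiagonalTuple N m : Finset (Fin N → ℕ)) ℚ n)

/-- The sum, over all chains `∅ = λ⁽⁰⁾ ⊆ λ⁽¹⁾ ⊆ … ⊆ λ⁽ˡ⁾` of partitions such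
that `λ⁽ⁱ⁾/λ⁽ⁱ⁻¹⁾` is a horizontal `L_i`-border strip of weight `m` for each
`i`, of `(∏ᵢ det M^{(L_i)}(λ⁽ⁱ⁾/λ⁽ⁱ⁻¹⁾)) · s_{λ⁽ˡ⁾}`. -/
noncomputable def chainExpansion (N m : ℕ) (L : List ℕ) : MvPolynomial (Fin N) ℚ :=
  ∑ᶠ c : {c : Fin (L.length + 1) → Partition //
      c 0 = Partition.empty ∧
      ∀ i : Fin L.length, IsHorizontalWeightStrip (L.get i) m (c i.castSucc) (c i.succ)},
    ((∏ i : Fin L.length,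
        Matrix.det (Mmat (L.get i) (c.1 i.castSucc) (c.1 i.succ) (c.1 i.succ).length) : ℤ) :
      MvPolynomial (Fin N) ℚ) * schur N (c.1 (Fin.last L.length))

end Pleth

open Pleth

/-!
Write `a_i = λ_i - i` and `b_j = μ_j - j`: both sequences are strictly decreasing, `b_i ≤ a_i`,
and `∑ (a_i - b_i) = n`. A permutation `σ` contributes to the Leibniz expansion of `det M(λ/μ)`
only if every `a_{σ j} - b_j` is a nonnegative multiple of `n`; since these add up to `n`, all but
one of them vanish. So the β-numbers of `μ` are those of `λ` with one bead moved from `a_r` down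
to `a_r - n`, and monotonicity forces `σ` to be the cycle `(r r+1 … s)`. Such a bead move is
exactly a border strip occupying rows `r, …, s`, and it determines `r` and `s`. Hence the
expansion has the single term `sign (r r+1 … s) = (-1)^(s-r) = (-1)^spin` when `λ/μ` is a border
strip, and no term at all otherwise.
-/

section

open Finset Equiv

theorem Fintype.exists_eq_and_eq_zero_of_sum_eq_of_dvd {ι : Type*} [Fintype ι] {t : ι → ℤ}
    {n : ℤ} (hn : 0 < n) (h0 : ∀ i, 0 ≤ t i) (hdvd : ∀ i, n ∣ t i) (hsum : ∑ i, t i = n) :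
    ∃ j, t j = n ∧ ∀ i ≠ j, t i = 0 := by
  classical
  obtain ⟨j, -, hj⟩ := exists_ne_zero_of_sum_ne_zero (hsum.trans_ne hn.ne')
  have hjn : t j = n := by
    refine le_antisymm (hsum ▸ single_le_sum (fun i _ => h0 i) (mem_univ j)) ?_
    obtain ⟨c, hc⟩ := hdvd j
    have hpos : 0 < n * c := hc ▸ lt_of_le_of_ne (h0 j) (Ne.symm hj)
    have hc1 : 0 < c := pos_of_mul_pos_right hpos hn.le
    nlinarith
  refine ⟨j, hjn, fun i hij => le_antisymm ?_ (h0 i)⟩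
  have := sum_le_sum_of_subset_of_nonneg (subset_univ {i, j}) fun k _ _ => h0 k
  rw [sum_pair hij, hsum, hjn] at this
  linarith

theorem Fin.perm_apply_le_of_forall_le_apply {l : ℕ} {σ : Perm (Fin l)} {s : Fin l}
    (h : ∀ j ≠ s, j ≤ σ j) : σ s ≤ s := by
  have hsum : ∑ j, (σ j : ℕ) = ∑ j : Fin l, (j : ℕ) := Equiv.sum_comp σ (fun j : Fin l => (j : ℕ))
  have hrest : ∑ j ∈ univ.erase s, (j : ℕ) ≤ ∑ j ∈ univ.erase s, (σ j : ℕ) :=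
    sum_le_sum fun j hj => h j (ne_of_mem_erase hj)
  rw [← add_sum_erase _ _ (mem_univ s), ← add_sum_erase _ _ (mem_univ s)] at hsum
  rw [Fin.le_def]
  omega

theorem Fin.perm_comp_succAbove_of_strictMonoOn {m : ℕ} {σ : Perm (Fin (m + 1))}
    {s : Fin (m + 1)} (h : StrictMonoOn σ {s}ᶜ) : σ ∘ s.succAbove = (σ s).succAbove := by
  have hmono : StrictMono (σ ∘ s.succAbove) := fun x y hxy =>
    h (by simp [Fin.succAbove_ne]) (by simp [Fin.succAbove_ne]) (Fin.strictMono_succAbove s hxy)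
  rw [← hmono.range_inj (Fin.strictMono_succAbove _), Set.range_comp, Fin.range_succAbove,
    Fin.range_succAbove, Set.image_compl_eq σ.bijective, Set.image_singleton]

theorem Fin.perm_eq_cycleIcc_of_strictMonoOn {l : ℕ} {σ : Perm (Fin l)} {s : Fin l}
    (hle : ∀ j ≠ s, j ≤ σ j) (hmono : StrictMonoOn σ {s}ᶜ) : σ = Fin.cycleIcc (σ s) s := by
  obtain _ | m := l
  · exact s.elim0
  have hrs := Fin.perm_apply_le_of_forall_le_apply hle
  ext1 k
  obtain rfl | ⟨x, rfl⟩ := s.eq_self_or_eq_succAbove k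
  · rw [Fin.cycleIcc_of_last hrs]
  · rw [← Function.comp_apply (f := σ), Fin.perm_comp_succAbove_of_strictMonoOn hmono,
      ← Function.comp_apply (f := Fin.cycleIcc _ _), Fin.cycleIcc_comp_succAbove _ _ hrs]

theorem Fin.val_cycleIcc_of_ge_of_lt {l : ℕ} {r s j : Fin l} (hrj : r ≤ j) (hjs : j < s) :
    (Fin.cycleIcc r s j : ℕ) = j + 1 := by
  have := j.neZero
  rw [Fin.cycleIcc_of_ge_of_lt hrj hjs, Fin.val_add_one_of_lt' (by omega)]

end

namespace Pleth

open Finset Equiv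

namespace Partition

variable (p : Partition)

theorem support_parts : Function.support p.parts = Set.Iio p.length := by
  have hzero : ∃ k, p.parts k = 0 := by
    obtain ⟨k, hk⟩ := p.finite.exists_notMem
    exact ⟨k, Function.notMem_support.mp hk⟩
  have hsupp : Function.support p.parts = Set.Iio (Nat.find hzero) := by
    ext i
    rw [Function.mem_support, Set.mem_Iio]
    refine ⟨fun hi => lt_of_not_ge fun hk => hi ?_, fun hi => Nat.find_min hzero hi⟩
    exact Nat.eq_zero_of_le_zero (Nat.find_spec hzero ▸ p.antitone hk)
  rw [Partition.length, hsupp, Set.ncard_Iio_nat]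

theorem parts_pos_iff {i : ℕ} : 0 < p.parts i ↔ i < p.length := by
  rw [← Set.mem_Iio (b := p.length), ← support_parts, Function.mem_support, Nat.pos_iff_ne_zero]

theorem parts_eq_zero_of_length_le {i : ℕ} (h : p.length ≤ i) : p.parts i = 0 := by
  have := (p.parts_pos_iff (i := i)).not
  omega

theorem size_eq_sum_range {k : ℕ} (h : p.length ≤ k) : p.size = ∑ i ∈ range k, p.parts i := by
  refine finsum_eq_sum_of_support_subset _ ?_
  rw [support_parts, coe_range]
  exact Set.Iio_subset_Iio h

theorem cells_eq_filter :
    p.cells = ↑((range p.length ×ˢ range (p.parts 0)).filter fun c => c.2 < p.parts c.1) := by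
  ext ⟨i, j⟩
  simp only [cells, Set.mem_ofPred_eq, coe_filter, mem_product, mem_range]
  have := p.antitone (Nat.zero_le i)
  have := (p.parts_pos_iff (i := i)).mp
  exact ⟨fun h => ⟨⟨by omega, by omega⟩, h⟩, fun h => h.2⟩

theorem ncard_cells : p.cells.ncard = p.size := by
  rw [cells_eq_filter, Set.ncard_coe_finset, card_filter, sum_product, p.size_eq_sum_range le_rfl]
  refine sum_congr rfl fun i _ => ?_
  rw [sum_boole, Nat.cast_id, ← card_range (p.parts i)]
  congr 1
  ext j
  have := p.antitone (Nat.zero_le i)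
  simp only [mem_filter, mem_range]
  omega

theorem Sub.length_le {mu lam : Partition} (h : mu.Sub lam) : mu.length ≤ lam.length := by
  by_contra hlt
  have := h lam.length
  have := (mu.parts_pos_iff (i := lam.length)).mpr (by omega)
  have := lam.parts_eq_zero_of_length_le le_rfl
  omega

def shiftedPart (i : ℕ) : ℤ := p.parts i - i

theorem shiftedPart_strictAnti : StrictAnti p.shiftedPart := fun i j hij => by
  have := p.antitone hij.le
  simp only [shiftedPart]
  omega

theorem Sub.shiftedPart_le {mu lam : Partition} (h : mu.Sub lam) (i : ℕ) :
    mu.shiftedPart i ≤ lam.shiftedPart i := by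
  have := h i
  simp only [shiftedPart]
  omega

theorem sum_shiftedPart_sub {n l : ℕ} {mu lam : Partition} (hsub : mu.Sub lam)
    (hsize : mu.size + n = lam.size) (hl : lam.length ≤ l) :
    ∑ i ∈ range l, (lam.shiftedPart i - mu.shiftedPart i) = n := by
  have hlam := lam.size_eq_sum_range hl
  have hmu := mu.size_eq_sum_range (hsub.length_le.trans hl)
  simp only [shiftedPart, sub_sub_sub_cancel_right, sum_sub_distrib]
  rw [← Nat.cast_sum, ← Nat.cast_sum, ← hlam, ← hmu]
  omega

end Partition

theorem mem_skew {mu lam : Partition} {i j : ℕ} :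
    (i, j) ∈ skew mu lam ↔ mu.parts i ≤ j ∧ j < lam.parts i := by
  simp only [skew, Set.mem_sdiff, Partition.cells, Set.mem_ofPred_eq, not_lt]
  exact and_comm

theorem ncard_skew_add_size {mu lam : Partition} (h : mu.Sub lam) :
    (skew mu lam).ncard + mu.size = lam.size := by
  rw [← mu.ncard_cells, ← lam.ncard_cells]
  refine Set.ncard_sdiff_add_ncard_of_subset (fun c hc => lt_of_lt_of_le hc (h c.1)) ?_
  rw [Partition.cells_eq_filter]
  exact finite_toSet _

theorem Adj.symm {a b : ℕ × ℕ} (h : Adj a b) : Adj b a := by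
  unfold Adj at *
  omega

/-- Steps of a path inside `S`; unlike the relation in `IsConnectedSet`, it is symmetric. -/
def AdjIn (S : Set (ℕ × ℕ)) (a b : ℕ × ℕ) : Prop := a ∈ S ∧ b ∈ S ∧ Adj a b

theorem isConnectedSet_of_forall_reflTransGen {S : Set (ℕ × ℕ)} (c : ℕ × ℕ)
    (h : ∀ a ∈ S, Relation.ReflTransGen (AdjIn S) a c) : IsConnectedSet S := by
  intro a ha b hb
  have hcb : Relation.ReflTransGen (AdjIn S) c b :=
    Relation.ReflTransGen.mono (fun _ _ hxy => ⟨hxy.2.1, hxy.1, hxy.2.2.symm⟩)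
      _ _ (Relation.reflTransGen_swap.mpr (h b hb))
  exact Relation.ReflTransGen.mono (fun _ _ hxy => hxy.2) _ _ ((h a ha).trans hcb)

theorem exists_vertical_adj_of_reflTransGen {S : Set (ℕ × ℕ)} {a b : ℕ × ℕ} (ha : a ∈ S)
    (h : Relation.ReflTransGen (fun x y => y ∈ S ∧ Adj x y) a b) {i : ℕ} (hai : a.1 ≤ i)
    (hib : i < b.1) : ∃ c, (i, c) ∈ S ∧ (i + 1, c) ∈ S := by
  induction h with
  | refl => omega
  | @tail x y hax hxy ih =>
    rcases lt_or_ge i x.1 with hix | hxi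
    · exact ih hix
    · have hx : x ∈ S := by
        obtain rfl | ⟨_, _, hx, _⟩ := hax.cases_tail
        exacts [ha, hx]
      obtain ⟨hy, hadj⟩ := hxy
      have hstep : y = (i + 1, x.2) ∧ x = (i, x.2) := by
        unfold Adj at hadj
        constructor <;> ext <;> dsimp only <;> omega
      exact ⟨x.2, hstep.2 ▸ hx, hstep.1 ▸ hy⟩

theorem parts_succ_eq_of_no2x2 {mu lam : Partition} (h : No2x2 (skew mu lam)) {i c : ℕ}
    (hc : (i, c) ∈ skew mu lam) (hc' : (i + 1, c) ∈ skew mu lam) :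
    lam.parts (i + 1) = mu.parts i + 1 := by
  rw [mem_skew] at hc hc'
  have := lam.antitone (Nat.le_add_right i 1)
  have := mu.antitone (Nat.le_add_right i 1)
  by_contra hne
  exact h ⟨i, mu.parts i, mem_skew.mpr (by omega), mem_skew.mpr (by omega),
    mem_skew.mpr (by omega), mem_skew.mpr (by omega)⟩

theorem sum_Icc_shiftedPart_sub {mu lam : Partition} {r s : ℕ} (hrs : r ≤ s)
    (h : ∀ i, r ≤ i → i < s → lam.parts (i + 1) = mu.parts i + 1) :
    ∑ i ∈ Icc r s, (lam.shiftedPart i - mu.shiftedPart i) =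
      lam.shiftedPart r - mu.shiftedPart s := by
  induction s, hrs using Nat.le_induction with
  | base => simp
  | succ s hrs ih =>
    rw [sum_Icc_succ_top (by omega), ih fun i hri his => h i hri (by omega)]
    have := h s hrs (Nat.lt_succ_self s)
    simp only [Partition.shiftedPart]
    omega

/-- `λ/μ` is a border strip of size `n` in rows `r, …, s`. By `parts_succ`, row `i + 1` of the
strip ends in the column where row `i` starts; `shiftedPart_eq` is the size condition. -/
structure IsBorderStripOn (n : ℕ) (mu lam : Partition) (r s : ℕ) : Prop where
  le : r ≤ s
  parts_eq_of_lt : ∀ i < r, mu.parts i = lam.parts i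
  parts_eq_of_gt : ∀ i, s < i → mu.parts i = lam.parts i
  parts_succ : ∀ i, r ≤ i → i < s → lam.parts (i + 1) = mu.parts i + 1
  shiftedPart_eq : lam.shiftedPart r = mu.shiftedPart s + n

namespace IsBorderStripOn

variable {n : ℕ} {mu lam : Partition} {r s : ℕ}

theorem parts_lt_iff (hn : 0 < n) (hb : IsBorderStripOn n mu lam r s) {i : ℕ} :
    mu.parts i < lam.parts i ↔ r ≤ i ∧ i ≤ s := by
  have hlast := hb.shiftedPart_eq
  simp only [Partition.shiftedPart] at hlast
  constructor
  · intro h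
    by_contra hi
    rcases not_and_or.mp hi with hi | hi
    · exact h.ne (hb.parts_eq_of_lt i (by omega))
    · exact h.ne (hb.parts_eq_of_gt i (by omega))
  · rintro ⟨hri, his⟩
    rcases his.lt_or_eq with his | rfl
    · have := hb.parts_succ i hri his
      have := lam.antitone (Nat.le_add_right i 1)
      omega
    · rcases hri.lt_or_eq with hri | rfl
      · have hprev := hb.parts_succ (i - 1) (by omega) (by omega)
        rw [Nat.sub_add_cancel (by omega)] at hprev
        have := mu.antitone (Nat.sub_le i 1)
        omega
      · omega

theorem unique (hn : 0 < n) (hb : IsBorderStripOn n mu lam r s) {r' s' : ℕ}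
    (hb' : IsBorderStripOn n mu lam r' s') : r = r' ∧ s = s' := by
  have h i : r ≤ i ∧ i ≤ s ↔ r' ≤ i ∧ i ≤ s' :=
    (hb.parts_lt_iff hn).symm.trans (hb'.parts_lt_iff hn)
  refine ⟨le_antisymm ?_ ?_, le_antisymm ?_ ?_⟩
  · exact ((h r').mpr ⟨le_rfl, hb'.le⟩).1
  · exact ((h r).mp ⟨le_rfl, hb.le⟩).1
  · exact ((h s).mp ⟨hb.le, le_rfl⟩).2
  · exact ((h s').mpr ⟨hb'.le, le_rfl⟩).2

theorem lt_length (hn : 0 < n) (hb : IsBorderStripOn n mu lam r s) : s < lam.length :=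
  lam.parts_pos_iff.mp (Nat.zero_lt_of_lt ((hb.parts_lt_iff hn).mpr ⟨hb.le, le_rfl⟩))

theorem mem_skew_iff (hb : IsBorderStripOn n mu lam r s) {i j : ℕ} :
    (i, j) ∈ skew mu lam ↔ r ≤ i ∧ i ≤ s ∧ mu.parts i ≤ j ∧ j < lam.parts i := by
  rw [mem_skew]
  refine ⟨fun h => ⟨?_, ?_, h⟩, fun h => h.2.2⟩
  · by_contra hi
    have := hb.parts_eq_of_lt i (by omega)
    omega
  · by_contra hi
    have := hb.parts_eq_of_gt i (by omega)
    omega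

theorem spin_skew (hn : 0 < n) (hb : IsBorderStripOn n mu lam r s) :
    spin (skew mu lam) = s - r := by
  have himage : Prod.fst '' skew mu lam = Set.Icc r s := by
    ext i
    simp only [Set.mem_image, Set.mem_Icc, Prod.exists, exists_and_right, exists_eq_right]
    refine ⟨fun ⟨j, hj⟩ => ?_, fun hi => ⟨mu.parts i, ?_⟩⟩
    · exact (hb.mem_skew_iff.mp hj).elim fun h1 h2 => ⟨h1, h2.1⟩
    · exact mem_skew.mpr ⟨le_rfl, (hb.parts_lt_iff hn).mpr hi⟩
  rw [spin, himage, Set.ncard_Icc_nat]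
  omega

theorem no2x2 (hb : IsBorderStripOn n mu lam r s) : No2x2 (skew mu lam) := by
  rintro ⟨i, j, h00, -, h01, h11⟩
  rw [hb.mem_skew_iff] at h00 h01 h11
  have := hb.parts_succ i h00.1 (by omega)
  omega

/-- Every box is joined to `(s, μ_s)`: move left along its row to `(i, μ_i)`, which sits just
above the box `(i + 1, μ_i)` of the next row. -/
theorem isConnectedSet (hb : IsBorderStripOn n mu lam r s) : IsConnectedSet (skew mu lam) := by
  have hrow : ∀ i j, (i, j) ∈ skew mu lam →
      Relation.ReflTransGen (AdjIn (skew mu lam)) (i, j) (i, mu.parts i) := by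
    intro i j hij
    induction j, (mem_skew.mp hij).1 using Nat.le_induction with
    | base => exact .refl
    | succ j hj ih =>
      have hj' : (i, j) ∈ skew mu lam :=
        mem_skew.mpr ⟨hj, (Nat.lt_succ_self j).trans (mem_skew.mp hij).2⟩
      exact .head ⟨hij, hj', Or.inl ⟨rfl, Or.inr rfl⟩⟩ (ih hj')
  refine isConnectedSet_of_forall_reflTransGen (s, mu.parts s) fun ⟨i, j⟩ hij => ?_
  obtain ⟨hri, his, hj⟩ := hb.mem_skew_iff.mp hij
  induction h : s - i generalizing i j with
  | zero => exact (Nat.le_antisymm his (by omega)) ▸ hrow i j hij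
  | succ k ih =>
    have hdown := hb.parts_succ i hri (by omega)
    have hi0 : (i, mu.parts i) ∈ skew mu lam := mem_skew.mpr ⟨le_rfl, by omega⟩
    have hi1 : (i + 1, mu.parts i) ∈ skew mu lam :=
      mem_skew.mpr ⟨mu.antitone (Nat.le_add_right i 1), by omega⟩
    exact (hrow i j hij).trans (.head ⟨hi0, hi1, Or.inr ⟨rfl, Or.inl rfl⟩⟩
      (ih (i + 1) _ hi1 (by omega) (by omega) (mem_skew.mp hi1) (by omega)))

theorem isBorderStrip (hb : IsBorderStripOn n mu lam r s) (hsub : mu.Sub lam)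
    (hsize : mu.size + n = lam.size) : IsBorderStrip mu lam n :=
  ⟨hsub, by have := ncard_skew_add_size hsub; omega, hb.isConnectedSet, hb.no2x2⟩

end IsBorderStripOn

theorem IsBorderStrip.exists_isBorderStripOn {n : ℕ} {mu lam : Partition} (hn : 0 < n)
    (hsize : mu.size + n = lam.size) (hbs : IsBorderStrip mu lam n) :
    ∃ r s, IsBorderStripOn n mu lam r s := by
  obtain ⟨hsub, hcard, hconn, hno2x2⟩ := hbs
  set rows := (range lam.length).filter fun i => mu.parts i < lam.parts i
  have mem_rows i : i ∈ rows ↔ mu.parts i < lam.parts i := by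
    simp only [rows, mem_filter, mem_range, and_iff_right_iff_imp]
    exact fun h => lam.parts_pos_iff.mp (Nat.zero_lt_of_lt h)
  have hne : rows.Nonempty := by
    obtain ⟨⟨i, j⟩, hij⟩ := Set.nonempty_of_ncard_ne_zero (hcard.trans_ne hn.ne')
    exact ⟨i, (mem_rows i).mpr ((mem_skew.mp hij).1.trans_lt (mem_skew.mp hij).2)⟩
  set r := rows.min' hne
  set s := rows.max' hne
  have hrs : r ≤ s := min'_le _ _ (max'_mem _ _)
  have eq_outside i (hi : i < r ∨ s < i) : mu.parts i = lam.parts i := by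
    refine le_antisymm (hsub i) (not_lt.mp fun hlt => ?_)
    have := min'_le _ _ ((mem_rows i).mpr hlt)
    have := le_max' _ _ ((mem_rows i).mpr hlt)
    omega
  have hr : (r, mu.parts r) ∈ skew mu lam :=
    mem_skew.mpr ⟨le_rfl, (mem_rows r).mp (min'_mem _ _)⟩
  have hs : (s, mu.parts s) ∈ skew mu lam :=
    mem_skew.mpr ⟨le_rfl, (mem_rows s).mp (max'_mem _ _)⟩
  have parts_succ i (hri : r ≤ i) (his : i < s) : lam.parts (i + 1) = mu.parts i + 1 := by
    obtain ⟨c, hc, hc'⟩ := exists_vertical_adj_of_reflTransGen hr (hconn _ hr _ hs) hri his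
    exact parts_succ_eq_of_no2x2 hno2x2 hc hc'
  refine ⟨r, s, hrs, fun i hi => eq_outside i (.inl hi), fun i hi => eq_outside i (.inr hi),
    parts_succ, ?_⟩
  have hsL : s < lam.length := mem_range.mp (mem_filter.mp (max'_mem rows hne)).1
  have htotal := Partition.sum_shiftedPart_sub hsub hsize le_rfl
  rw [← sum_subset (s₁ := Icc r s) (fun i hi => mem_range.mpr ?_) fun i _ hi => ?_,
    sum_Icc_shiftedPart_sub hrs parts_succ] at htotal
  · omega
  · exact (mem_Icc.mp hi).2.trans_lt hsL
  · have := eq_outside i (by rw [mem_Icc] at hi; omega)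
    simp only [Partition.shiftedPart, this, sub_self]

theorem Mmat_apply {n l : ℕ} {mu lam : Partition} (i j : Fin l) :
    Mmat n mu lam l i j = if mu.shiftedPart j ≤ lam.shiftedPart i ∧
      (n : ℤ) ∣ lam.shiftedPart i - mu.shiftedPart j then 1 else 0 := rfl

/-- `σ` contributes a nonzero term to the Leibniz expansion of `det (Mmat n mu lam l)`: all the
entries `Mmat n mu lam l (σ j) j` are `1`. -/
def IsSupportPerm (n : ℕ) (mu lam : Partition) {l : ℕ} (σ : Perm (Fin l)) : Prop :=
  ∀ j : Fin l, mu.shiftedPart j ≤ lam.shiftedPart (σ j) ∧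
    (n : ℤ) ∣ lam.shiftedPart (σ j) - mu.shiftedPart j

open scoped Classical in
theorem det_Mmat_eq_sum (n l : ℕ) (mu lam : Partition) :
    (Mmat n mu lam l).det =
      ∑ σ ∈ univ.filter (IsSupportPerm n mu lam (l := l)), (Perm.sign σ : ℤ) := by
  rw [Matrix.det_apply, sum_filter]
  refine sum_congr rfl fun σ _ => ?_
  simp only [Mmat_apply, Fintype.prod_boole, smul_ite, smul_zero]
  exact if_congr Iff.rfl (by rw [Units.smul_def, smul_eq_mul, mul_one]) rfl

section SupportPerm

variable {n l : ℕ} {mu lam : Partition}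

theorem isSupportPerm_of_shiftedPart_eq {σ : Perm (Fin l)} {s : Fin l}
    (h : ∀ j, lam.shiftedPart (σ j) = mu.shiftedPart j + if j = s then (n : ℤ) else 0) :
    IsSupportPerm n mu lam σ := fun j => by
  rw [h j]
  split_ifs <;> simp

/-- The entries picked by a support permutation are nonnegative multiples of `n` adding up to
`|λ| - |μ| = n`, so exactly one of them is nonzero. -/
theorem IsSupportPerm.exists_shiftedPart_eq (hn : 0 < n) (hsub : mu.Sub lam)
    (hsize : mu.size + n = lam.size) (hl : lam.length ≤ l) {σ : Perm (Fin l)}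
    (hσ : IsSupportPerm n mu lam σ) :
    ∃ s, ∀ j, lam.shiftedPart (σ j) = mu.shiftedPart j + if j = s then (n : ℤ) else 0 := by
  have hsum : ∑ j, (lam.shiftedPart (σ j) - mu.shiftedPart j) = n := by
    rw [sum_sub_distrib, Equiv.sum_comp σ (fun j : Fin l => lam.shiftedPart j), ← sum_sub_distrib,
      Fin.sum_univ_eq_sum_range (fun j => lam.shiftedPart j - mu.shiftedPart j)]
    exact Partition.sum_shiftedPart_sub hsub hsize hl
  obtain ⟨s, hs, hzero⟩ := Fintype.exists_eq_and_eq_zero_of_sum_eq_of_dvd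
    (Int.natCast_pos.mpr hn) (fun j => sub_nonneg.mpr (hσ j).1) (fun j => (hσ j).2) hsum
  refine ⟨s, fun j => ?_⟩
  split_ifs with hj
  · subst hj
    omega
  · have := hzero j hj
    omega

theorem eq_cycleIcc_of_shiftedPart_eq (hsub : mu.Sub lam) {σ : Perm (Fin l)} {s : Fin l}
    (h : ∀ j, lam.shiftedPart (σ j) = mu.shiftedPart j + if j = s then (n : ℤ) else 0) :
    σ s ≤ s ∧ σ = Fin.cycleIcc (σ s) s := by
  have heq j (hj : j ≠ s) : lam.shiftedPart (σ j) = mu.shiftedPart j := by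
    simpa [hj] using h j
  have hle j (hj : j ≠ s) : j ≤ σ j := by
    have hb : mu.shiftedPart (σ j) ≤ mu.shiftedPart j := heq j hj ▸ hsub.shiftedPart_le (σ j)
    exact Fin.le_def.mpr (mu.shiftedPart_strictAnti.le_iff_ge.mp hb)
  have hmono : StrictMonoOn σ {s}ᶜ := fun j hj k hk hjk => by
    have := mu.shiftedPart_strictAnti (Fin.lt_def.mp hjk)
    rw [← heq j hj, ← heq k hk] at this
    exact Fin.lt_def.mpr (lam.shiftedPart_strictAnti.lt_iff_gt.mp this)
  exact ⟨Fin.perm_apply_le_of_forall_le_apply hle, Fin.perm_eq_cycleIcc_of_strictMonoOn hle hmono⟩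

theorem isBorderStripOn_of_shiftedPart_cycleIcc_eq (hsub : mu.Sub lam) (hl : lam.length ≤ l)
    {r s : Fin l} (hrs : r ≤ s) (h : ∀ j, lam.shiftedPart (Fin.cycleIcc r s j) =
      mu.shiftedPart j + if j = s then (n : ℤ) else 0) :
    IsBorderStripOn n mu lam r s := by
  have fixed (j : Fin l) (hj : j < r ∨ s < j) : mu.parts j = lam.parts j := by
    have hσ : Fin.cycleIcc r s j = j := hj.elim Fin.cycleIcc_of_lt Fin.cycleIcc_of_gt
    have hjs : j ≠ s := by
      rintro rfl
      exact hj.elim (fun h => (h.trans_le hrs).false) (lt_irrefl _)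
    have := h j
    rw [hσ, if_neg hjs] at this
    simp only [Partition.shiftedPart] at this
    omega
  refine ⟨hrs, fun i hi => fixed ⟨i, by omega⟩ (.inl hi), fun i hi => ?_, fun i hri his => ?_, ?_⟩
  · rcases lt_or_ge i l with hil | hil
    · exact fixed ⟨i, hil⟩ (.inr hi)
    · have := lam.parts_eq_zero_of_length_le (hl.trans hil)
      have := hsub i
      omega
  · have := h ⟨i, by omega⟩
    rw [if_neg (Fin.ne_of_lt (Fin.mk_lt_of_lt_val his))] at this
    simp only [Partition.shiftedPart,
      Fin.val_cycleIcc_of_ge_of_lt (Fin.le_def.mpr hri) (Fin.mk_lt_of_lt_val his)] at this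
    omega
  · have := s.neZero
    have := h s
    rwa [Fin.cycleIcc_of_last hrs, if_pos rfl] at this

theorem IsBorderStripOn.shiftedPart_cycleIcc_eq {r s : Fin l}
    (hb : IsBorderStripOn n mu lam r s) (j : Fin l) :
    lam.shiftedPart (Fin.cycleIcc r s j) = mu.shiftedPart j + if j = s then (n : ℤ) else 0 := by
  have hrs : r ≤ s := hb.le
  have := s.neZero
  rcases lt_or_ge j r with hjr | hrj
  · rw [Fin.cycleIcc_of_lt hjr, if_neg (hjr.trans_le hrs).ne]
    simp [Partition.shiftedPart, hb.parts_eq_of_lt j hjr]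
  rcases lt_trichotomy j s with hjs | rfl | hsj
  · rw [if_neg hjs.ne]
    simp only [Partition.shiftedPart, Fin.val_cycleIcc_of_ge_of_lt hrj hjs,
      hb.parts_succ j hrj hjs]
    omega
  · rw [Fin.cycleIcc_of_last hrs, if_pos rfl]
    exact hb.shiftedPart_eq
  · rw [Fin.cycleIcc_of_gt hsj, if_neg hsj.ne']
    simp [Partition.shiftedPart, hb.parts_eq_of_gt j hsj]

theorem IsSupportPerm.exists_isBorderStripOn (hn : 0 < n) (hsub : mu.Sub lam)
    (hsize : mu.size + n = lam.size) (hl : lam.length ≤ l) {σ : Perm (Fin l)}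
    (hσ : IsSupportPerm n mu lam σ) :
    ∃ r s : Fin l, σ = Fin.cycleIcc r s ∧ IsBorderStripOn n mu lam r s := by
  obtain ⟨s, hs⟩ := hσ.exists_shiftedPart_eq hn hsub hsize hl
  obtain ⟨hrs, hcyc⟩ := eq_cycleIcc_of_shiftedPart_eq hsub hs
  exact ⟨σ s, s, hcyc, isBorderStripOn_of_shiftedPart_cycleIcc_eq hsub hl hrs (hcyc ▸ hs)⟩

theorem IsBorderStripOn.det_Mmat (hn : 0 < n) (hsub : mu.Sub lam)
    (hsize : mu.size + n = lam.size) (hl : lam.length ≤ l) {r s : ℕ}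
    (hb : IsBorderStripOn n mu lam r s) : (Mmat n mu lam l).det = (-1) ^ (s - r) := by
  classical
  have hsl : s < l := (hb.lt_length hn).trans_le hl
  set r' : Fin l := ⟨r, hb.le.trans_lt hsl⟩
  set s' : Fin l := ⟨s, hsl⟩
  have hb' : IsBorderStripOn n mu lam r' s' := hb
  have hsupport : univ.filter (IsSupportPerm n mu lam) = {Fin.cycleIcc r' s'} := by
    ext σ
    simp only [mem_filter, mem_univ, true_and, mem_singleton]
    constructor
    · intro hσ
      obtain ⟨r₀, s₀, rfl, hb₀⟩ := hσ.exists_isBorderStripOn hn hsub hsize hl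
      obtain ⟨hr, hs⟩ := hb₀.unique hn hb
      rw [show r₀ = r' from Fin.ext hr, show s₀ = s' from Fin.ext hs]
    · rintro rfl
      exact isSupportPerm_of_shiftedPart_eq hb'.shiftedPart_cycleIcc_eq
  rw [det_Mmat_eq_sum, hsupport, sum_singleton, Fin.sign_cycleIcc_of_le hb'.le]
  push_cast
  rfl

theorem exists_isBorderStripOn_of_det_Mmat_ne_zero (hn : 0 < n) (hsub : mu.Sub lam)
    (hsize : mu.size + n = lam.size) (hl : lam.length ≤ l) (hdet : (Mmat n mu lam l).det ≠ 0) :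
    ∃ r s, IsBorderStripOn n mu lam r s := by
  classical
  rw [det_Mmat_eq_sum] at hdet
  obtain ⟨σ, hσ, -⟩ := exists_ne_zero_of_sum_ne_zero hdet
  obtain ⟨r, s, -, hb⟩ := (mem_filter.mp hσ).2.exists_isBorderStripOn hn hsub hsize hl
  exact ⟨r, s, hb⟩

end SupportPerm

end Pleth

/-- The `k = 1` determinant-type Murnaghan–Nakayama rule: for `|λ| − |μ| = n`,
`det M(λ/μ) = (−1)^{spin(λ/μ)}` if `λ/μ` is a border strip, and `0` otherwise. -/
theorem det_M_border_strip (n : ℕ) (hn : 0 < n) (mu lam : Partition)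
    (hsub : mu.Sub lam) (hsize : mu.size + n = lam.size) :
    (IsBorderStrip mu lam n →
      Matrix.det (Mmat n mu lam lam.length) = (-1 : ℤ) ^ spin (skew mu lam)) ∧
    (¬ IsBorderStrip mu lam n → Matrix.det (Mmat n mu lam lam.length) = 0) := by
  refine ⟨fun hbs => ?_, fun hbs => ?_⟩
  · obtain ⟨r, s, hb⟩ := hbs.exists_isBorderStripOn hn hsize
    rw [hb.spin_skew hn, hb.det_Mmat hn hsub hsize le_rfl]
  · by_contra hdet
    obtain ⟨r, s, hb⟩ := exists_isBorderStripOn_of_det_Mmat_ne_zero hn hsub hsize le_rfl hdet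
    exact hbs (hb.isBorderStrip hsub hsize)
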